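/- Let n ≥ 6, let G be a graph maximizing the Q-spread s_Q among all connected graphs on n vertices, and let x be a positive unit eigenvector of Q(G) for q1(G). Then for every vertex v, x_v < √n/(n − 3). -/

import Mathlib

/-- The adjacency matrix of a simple graph on `Fin n`, over `ℝ`. -/
noncomputable def adjMat {n : ℕ} (G : SimpleGraph (Fin n)) : Matrix (Fin n) (Fin n) ℝ :=
  letI : DecidableRel G.Adj := Classical.decRel _
  G.adjMatrix ℝ

/-- The set of eigenvalues of a real square matrix. -/
def eigSet {n : ℕ} (M : Matrix (Fin n) (Fin n) ℝ) : Set ℝ :=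
  {mu : ℝ | ∃ x : Fin n → ℝ, x ≠ 0 ∧ M.mulVec x = mu • x}

/-- The largest eigenvalue of a real square matrix. -/
noncomputable def lamMax {n : ℕ} (M : Matrix (Fin n) (Fin n) ℝ) : ℝ := sSup (eigSet M)

/-- The least eigenvalue of a real square matrix. -/
noncomputable def lamMin {n : ℕ} (M : Matrix (Fin n) (Fin n) ℝ) : ℝ := sInf (eigSet M)

/-- `λ₁(G)`: the largest adjacency eigenvalue of `G`. -/
noncomputable def lam1 {n : ℕ} (G : SimpleGraph (Fin n)) : ℝ := lamMax (adjMat G)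

/-- The degree of a vertex. -/
noncomputable def deg {n : ℕ} (G : SimpleGraph (Fin n)) (v : Fin n) : ℕ :=
  Nat.card {u : Fin n // G.Adj v u}

/-- The signless Laplacian `Q(G) = D(G) + A(G)`. -/
noncomputable def signlessLap {n : ℕ} (G : SimpleGraph (Fin n)) : Matrix (Fin n) (Fin n) ℝ :=
  Matrix.diagonal (fun v => (deg G v : ℝ)) + adjMat G

/-- `q₁(G)`: the largest signless Laplacian eigenvalue. -/
noncomputable def q1 {n : ℕ} (G : SimpleGraph (Fin n)) : ℝ := lamMax (signlessLap G)

/-- `qₙ(G)`: the least signless Laplacian eigenvalue. -/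
noncomputable def qmin {n : ℕ} (G : SimpleGraph (Fin n)) : ℝ := lamMin (signlessLap G)

/-- The `Q`-spread `s_Q(G) = q₁(G) - qₙ(G)`. -/
noncomputable def sQ {n : ℕ} (G : SimpleGraph (Fin n)) : ℝ := q1 G - qmin G

/-- The complete split graph `CS_{n,ω}`: a clique on the first `ω` vertices, completely
joined to an independent set on the remaining `n - ω` vertices. -/
def CS (n w : ℕ) : SimpleGraph (Fin n) where
  Adj u v := u ≠ v ∧ ((u : ℕ) < w ∨ (v : ℕ) < w)
  symm := by constructor; intro u v h; exact ⟨h.1.symm, h.2.symm⟩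
  loopless := by constructor; intro u h; exact h.1 rfl

/-- `K_{n-1}^+`: the complete graph on the first `n-1` vertices together with a pendant
vertex (the last vertex) joined to exactly one clique vertex (vertex `0`). -/
def KPlus (n : ℕ) : SimpleGraph (Fin n) where
  Adj u v := u ≠ v ∧ (((u : ℕ) < n - 1 ∧ (v : ℕ) < n - 1) ∨ (u : ℕ) = 0 ∨ (v : ℕ) = 0)
  symm := by constructor; intro u v h; refine ⟨h.1.symm, ?_⟩; tauto
  loopless := by constructor; intro u h; exact h.1 rfl

/-!
Comparing with `K_{n-1}^+` gives `s_Q(G) ≥ s_Q(K_{n-1}^+) ≥ 2n - 5`: the Rayleigh quotient of the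
indicator of the clique `K_{n-1}` gives `q₁(K_{n-1}^+) ≥ 2n - 4`, and that of the pendant vertex
gives `qₙ(K_{n-1}^+) ≤ 1`. Since `Q(G) = N Nᵀ` for the incidence matrix `N`, `qₙ(G) ≥ 0`, hence
`q₁(G) ≥ 2n - 5` and `q₁(G) - d_v ≥ n - 4`. The eigenvalue equation at `v` and Cauchy–Schwarz
over the neighbours of `v` give `(n - 4)² x_v² ≤ (q₁(G) - d_v)² x_v² ≤ d_v (1 - x_v²)`, and with
`d_v ≤ n - 1` this yields `x_v² ≤ (n - 1) / ((n - 4)² + n - 1) < n / (n - 3)²`.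
-/

open Finset Matrix

namespace Matrix.IsHermitian

variable {ι : Type*} [Fintype ι] [DecidableEq ι] {M : Matrix ι ι ℝ} (hM : M.IsHermitian)

lemma dotProduct_eq_sum_eigenvectorBasis (y w : ι → ℝ) :
    y ⬝ᵥ w = ∑ i, (⇑(hM.eigenvectorBasis i) ⬝ᵥ y) * (⇑(hM.eigenvectorBasis i) ⬝ᵥ w) := by
  have := hM.eigenvectorBasis.sum_inner_mul_inner (WithLp.toLp 2 y) (WithLp.toLp 2 w)
  simp only [EuclideanSpace.inner_eq_star_dotProduct, star_trivial] at this
  rw [dotProduct_comm y w, ← this]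
  refine sum_congr rfl fun i _ => ?_
  rw [dotProduct_comm w]

lemma eigenvectorBasis_dotProduct_mulVec (i : ι) (y : ι → ℝ) :
    ⇑(hM.eigenvectorBasis i) ⬝ᵥ M *ᵥ y = hM.eigenvalues i * (⇑(hM.eigenvectorBasis i) ⬝ᵥ y) := by
  rw [dotProduct_mulVec, ← mulVec_transpose, ← conjTranspose_eq_transpose_of_trivial, hM.eq,
    mulVec_eigenvectorBasis, smul_dotProduct, smul_eq_mul]

lemma dotProduct_mulVec_eq_sum_eigenvalues (y : ι → ℝ) :
    y ⬝ᵥ M *ᵥ y = ∑ i, hM.eigenvalues i * (⇑(hM.eigenvectorBasis i) ⬝ᵥ y) ^ 2 := by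
  rw [hM.dotProduct_eq_sum_eigenvectorBasis]
  refine sum_congr rfl fun i _ => ?_
  rw [eigenvectorBasis_dotProduct_mulVec]; ring

lemma exists_dotProduct_mulVec_le_eigenvalues_mul [Nonempty ι] (y : ι → ℝ) :
    ∃ i, y ⬝ᵥ M *ᵥ y ≤ hM.eigenvalues i * (y ⬝ᵥ y) := by
  obtain ⟨i, -, hi⟩ := exists_max_image univ hM.eigenvalues univ_nonempty
  refine ⟨i, ?_⟩
  rw [hM.dotProduct_mulVec_eq_sum_eigenvalues, hM.dotProduct_eq_sum_eigenvectorBasis y y,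
    mul_sum]
  refine sum_le_sum fun j hj => ?_
  rw [← sq]
  exact mul_le_mul_of_nonneg_right (hi j hj) (sq_nonneg _)

lemma exists_eigenvalues_mul_le_dotProduct_mulVec [Nonempty ι] (y : ι → ℝ) :
    ∃ i, hM.eigenvalues i * (y ⬝ᵥ y) ≤ y ⬝ᵥ M *ᵥ y := by
  obtain ⟨i, -, hi⟩ := exists_min_image univ hM.eigenvalues univ_nonempty
  refine ⟨i, ?_⟩
  rw [hM.dotProduct_mulVec_eq_sum_eigenvalues, hM.dotProduct_eq_sum_eigenvectorBasis y y,
    mul_sum]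
  refine sum_le_sum fun j hj => ?_
  rw [← sq]
  exact mul_le_mul_of_nonneg_right (hi j hj) (sq_nonneg _)

end Matrix.IsHermitian

lemma eigSet_subset_spectrum {n : ℕ} (M : Matrix (Fin n) (Fin n) ℝ) :
    eigSet M ⊆ spectrum ℝ M := by
  rintro mu ⟨y, hy, hMy⟩
  rw [← Matrix.spectrum_toLin', ← Module.End.hasEigenvalue_iff_mem_spectrum]
  exact Module.End.hasEigenvalue_of_hasEigenvector
    ⟨Module.End.mem_eigenspace_iff.mpr (by simpa using hMy), hy⟩

lemma Matrix.IsHermitian.eigSet_eq_range_eigenvalues {n : ℕ} {M : Matrix (Fin n) (Fin n) ℝ}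
    (hM : M.IsHermitian) : eigSet M = Set.range hM.eigenvalues := by
  refine (eigSet_subset_spectrum M).trans hM.spectrum_real_eq_range_eigenvalues.subset
    |>.antisymm ?_
  rintro _ ⟨i, rfl⟩
  exact ⟨_, (WithLp.ofLp_eq_zero 2).ne.2 <| hM.eigenvectorBasis.orthonormal.ne_zero i,
    hM.mulVec_eigenvectorBasis i⟩

section Rayleigh

variable {n : ℕ} {M : Matrix (Fin n) (Fin n) ℝ}

lemma dotProduct_mulVec_le_lamMax (hM : M.IsHermitian) (y : Fin n → ℝ) :
    y ⬝ᵥ M *ᵥ y ≤ lamMax M * (y ⬝ᵥ y) := by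
  rcases isEmpty_or_nonempty (Fin n) with h | h
  · simp [dotProduct]
  obtain ⟨i, hi⟩ := hM.exists_dotProduct_mulVec_le_eigenvalues_mul y
  have hle : hM.eigenvalues i ≤ lamMax M := by
    rw [lamMax, hM.eigSet_eq_range_eigenvalues]
    exact le_csSup (Set.finite_range _).bddAbove ⟨i, rfl⟩
  exact hi.trans (mul_le_mul_of_nonneg_right hle (dotProduct_self_star_nonneg y))

lemma lamMin_mul_le_dotProduct_mulVec (hM : M.IsHermitian) (y : Fin n → ℝ) :
    lamMin M * (y ⬝ᵥ y) ≤ y ⬝ᵥ M *ᵥ y := by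
  rcases isEmpty_or_nonempty (Fin n) with h | h
  · simp [dotProduct]
  obtain ⟨i, hi⟩ := hM.exists_eigenvalues_mul_le_dotProduct_mulVec y
  have hle : lamMin M ≤ hM.eigenvalues i := by
    rw [lamMin, hM.eigSet_eq_range_eigenvalues]
    exact csInf_le (Set.finite_range _).bddBelow ⟨i, rfl⟩
  exact (mul_le_mul_of_nonneg_right hle (dotProduct_self_star_nonneg y)).trans hi

lemma lamMin_le_diag (hM : M.IsHermitian) (i : Fin n) : lamMin M ≤ M i i := by
  simpa using lamMin_mul_le_dotProduct_mulVec hM (Pi.single i 1)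

lemma Matrix.PosSemidef.lamMin_nonneg (hM : M.PosSemidef) : 0 ≤ lamMin M := by
  rw [lamMin, hM.isHermitian.eigSet_eq_range_eigenvalues]
  exact Real.sInf_nonneg <| Set.forall_mem_range.2 hM.eigenvalues_nonneg

end Rayleigh

namespace SimpleGraph

variable {n : ℕ} (G : SimpleGraph (Fin n))

lemma adjMat_eq_adjMatrix [DecidableRel G.Adj] : adjMat G = G.adjMatrix ℝ := by
  unfold adjMat
  congr

lemma deg_eq_degree [DecidableRel G.Adj] (v : Fin n) : deg G v = G.degree v := by
  rw [deg, ← card_neighborSet_eq_degree, ← Nat.card_eq_fintype_card]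
  rfl

lemma signlessLap_eq_incMatrix_mul_transpose [DecidableRel G.Adj] :
    signlessLap G = G.incMatrix ℝ * (G.incMatrix ℝ)ᵀ := by
  ext u v
  rw [incMatrix_mul_transpose, signlessLap, adjMat_eq_adjMatrix]
  by_cases h : u = v
  · subst h
    simp [deg_eq_degree]
  · simp [h, adjMatrix_apply]

lemma posSemidef_signlessLap : (signlessLap G).PosSemidef := by
  classical
  rw [signlessLap_eq_incMatrix_mul_transpose, ← conjTranspose_eq_transpose_of_trivial]
  exact posSemidef_self_mul_conjTranspose _

lemma qmin_nonneg : 0 ≤ qmin G := (posSemidef_signlessLap G).lamMin_nonneg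

lemma qmin_le_deg (v : Fin n) : qmin G ≤ deg G v := by
  classical
  have hdiag : signlessLap G v v = deg G v := by
    simp [signlessLap, adjMat_eq_adjMatrix]
  exact hdiag ▸ lamMin_le_diag (posSemidef_signlessLap G).isHermitian v

lemma signlessLap_mulVec_apply [DecidableRel G.Adj] (x : Fin n → ℝ) (v : Fin n) :
    (signlessLap G *ᵥ x) v = G.degree v * x v + ∑ u ∈ G.neighborFinset v, x u := by
  rw [signlessLap, add_mulVec, Pi.add_apply, mulVec_diagonal, adjMat_eq_adjMatrix,
    adjMatrix_mulVec_apply, deg_eq_degree]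

lemma two_mul_card_sub_one_le_q1 {s : Finset (Fin n)} (hs : G.IsClique (s : Set (Fin n)))
    (hne : s.Nonempty) : 2 * ((#s : ℝ) - 1) ≤ q1 G := by
  classical
  set y : Fin n → ℝ := fun v => if v ∈ s then 1 else 0
  have hyy : y ⬝ᵥ y = #s := by
    simp [y, dotProduct]
  have hQy : ∀ v ∈ s, 2 * ((#s : ℝ) - 1) ≤ (signlessLap G *ᵥ y) v := by
    intro v hv
    have hsub : s.erase v ⊆ G.neighborFinset v := fun u hu => by
      rw [mem_neighborFinset]
      exact hs hv (mem_of_mem_erase hu) (ne_of_mem_erase hu).symm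
    have hcard : (#s : ℝ) - 1 = #(s.erase v) := by
      rw [← card_erase_add_one hv]; push_cast; ring
    have hdeg : (#s : ℝ) - 1 ≤ G.degree v := by
      rw [hcard, ← card_neighborFinset_eq_degree]
      exact_mod_cast card_le_card hsub
    have hnbr : (#s : ℝ) - 1 ≤ ∑ u ∈ G.neighborFinset v, y u := calc
      (#s : ℝ) - 1 = ∑ u ∈ s.erase v, y u := by
        rw [hcard, sum_congr rfl fun u hu => if_pos (mem_of_mem_erase hu)]
        simp
      _ ≤ ∑ u ∈ G.neighborFinset v, y u :=
        sum_le_sum_of_subset_of_nonneg hsub fun u _ _ => by simp only [y]; split <;> norm_num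
    rw [signlessLap_mulVec_apply, show y v = 1 from if_pos hv]
    linarith
  have hquad : 2 * ((#s : ℝ) - 1) * #s ≤ y ⬝ᵥ signlessLap G *ᵥ y := by
    simp only [dotProduct, y, ite_mul, one_mul, zero_mul]
    rw [sum_ite_mem, univ_inter, mul_comm, ← nsmul_eq_mul]
    exact card_nsmul_le_sum _ _ _ hQy
  have hpos : (0 : ℝ) < #s := by exact_mod_cast hne.card_pos
  have := dotProduct_mulVec_le_lamMax (posSemidef_signlessLap G).isHermitian y
  rw [hyy] at this
  exact le_of_mul_le_mul_right (hquad.trans this) hpos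

lemma sq_sub_degree_mul_le [DecidableRel G.Adj] {q : ℝ} {x : Fin n → ℝ}
    (hx : signlessLap G *ᵥ x = q • x) (v : Fin n) :
    ((q - G.degree v) * x v) ^ 2 ≤ G.degree v * (∑ u, x u ^ 2 - x v ^ 2) := by
  have hv : (q - G.degree v) * x v = ∑ u ∈ G.neighborFinset v, x u := by
    have := congrFun hx v
    rw [signlessLap_mulVec_apply, Pi.smul_apply, smul_eq_mul] at this
    linarith
  have hsub : G.neighborFinset v ⊆ univ.erase v := fun u hu =>
    mem_erase.2 ⟨(G.ne_of_adj ((mem_neighborFinset _ _ _).1 hu)).symm, mem_univ u⟩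
  calc ((q - G.degree v) * x v) ^ 2
      ≤ G.degree v * ∑ u ∈ G.neighborFinset v, x u ^ 2 := by
        rw [hv, ← card_neighborFinset_eq_degree]
        exact sq_sum_le_card_mul_sum_sq
    _ ≤ G.degree v * ∑ u ∈ univ.erase v, x u ^ 2 :=
        mul_le_mul_of_nonneg_left
          (sum_le_sum_of_subset_of_nonneg hsub fun _ _ _ => sq_nonneg _) (Nat.cast_nonneg _)
    _ = G.degree v * (∑ u, x u ^ 2 - x v ^ 2) := by
        rw [sum_erase_eq_sub (mem_univ v)]

end SimpleGraph

section KPlus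

variable {n : ℕ}

lemma KPlus_adj_zero (hn : 0 < n) {v : Fin n} (hv : v ≠ ⟨0, hn⟩) : (KPlus n).Adj ⟨0, hn⟩ v :=
  ⟨hv.symm, Or.inr (Or.inl rfl)⟩

lemma KPlus_connected (hn : 0 < n) : (KPlus n).Connected := by
  have hreach (v : Fin n) : (KPlus n).Reachable ⟨0, hn⟩ v := by
    by_cases hv : v = ⟨0, hn⟩
    · exact hv ▸ SimpleGraph.Reachable.refl _
    · exact (KPlus_adj_zero hn hv).reachable
  exact (SimpleGraph.connected_iff _).2
    ⟨fun u v => (hreach u).symm.trans (hreach v), ⟨⟨0, hn⟩⟩⟩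

lemma KPlus_isClique (hn : 0 < n) :
    (KPlus n).IsClique ((univ.erase ⟨n - 1, by omega⟩ : Finset (Fin n)) : Set (Fin n)) := by
  intro u hu v hv huv
  simp only [coe_erase, coe_univ, Set.mem_sdiff, Set.mem_univ, Set.mem_singleton_iff,
    true_and, Fin.ext_iff] at hu hv
  exact ⟨huv, Or.inl ⟨by omega, by omega⟩⟩

lemma deg_KPlus_last (hn : 2 ≤ n) : deg (KPlus n) ⟨n - 1, by omega⟩ = 1 := by
  rw [deg, Nat.card_eq_one_iff_exists]
  refine ⟨⟨⟨0, by omega⟩, ⟨?_, Or.inr (Or.inr rfl)⟩⟩, ?_⟩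
  · rw [Ne, Fin.mk.injEq]; omega
  · rintro ⟨u, hne, h⟩
    refine Subtype.ext (Fin.ext ?_)
    simp only [ne_eq, Fin.ext_iff] at hne h ⊢
    omega

lemma two_mul_sub_five_le_sQ_KPlus (hn : 2 ≤ n) : 2 * (n : ℝ) - 5 ≤ sQ (KPlus n) := by
  have hq1 := (KPlus n).two_mul_card_sub_one_le_q1 (KPlus_isClique (by omega))
    ⟨⟨0, by omega⟩, mem_erase.2 ⟨by rw [Ne, Fin.mk.injEq]; omega, mem_univ _⟩⟩
  have hqmin := (KPlus n).qmin_le_deg ⟨n - 1, by omega⟩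
  rw [card_erase_of_mem (mem_univ _), card_univ, Fintype.card_fin] at hq1
  rw [deg_KPlus_last hn] at hqmin
  rw [sQ]
  push_cast [Nat.cast_sub (by omega : 1 ≤ n)] at hq1 hqmin
  linarith

end KPlus

lemma lt_sqrt_div_of_sq_mul_sq_le {N a d t : ℝ} (hN : 4 ≤ N) (ha : N - 4 ≤ a) (hd : d ≤ N - 1)
    (ht : t ^ 2 ≤ 1) (h : (a * t) ^ 2 ≤ d * (1 - t ^ 2)) : t < √N / (N - 3) := by
  have hsq : t ^ 2 * ((N - 4) ^ 2 + (N - 1)) ≤ N - 1 := by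
    nlinarith [mul_le_mul_of_nonneg_right hd (sub_nonneg.2 ht),
      mul_le_mul_of_nonneg_right (pow_le_pow_left₀ (by linarith) ha 2) (sq_nonneg t)]
  have hlt : (t * (N - 3)) ^ 2 < N := by nlinarith
  rw [lt_div_iff₀ (by linarith)]
  exact Real.lt_sqrt_of_sq_lt hlt

theorem stmt14_general (n : ℕ) (hn : 6 ≤ n) (G : SimpleGraph (Fin n))
    (hmax : ∀ H : SimpleGraph (Fin n), H.Connected → sQ H ≤ sQ G)
    (x : Fin n → ℝ) (hx1 : ∑ v, x v ^ 2 = 1)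
    (hx : (signlessLap G).mulVec x = q1 G • x) :
    ∀ v : Fin n, x v < Real.sqrt n / ((n : ℝ) - 3) := by
  classical
  intro v
  have hN : (6 : ℝ) ≤ n := by exact_mod_cast hn
  have hq1 : 2 * (n : ℝ) - 5 ≤ q1 G := by
    have hsQ : sQ (KPlus n) ≤ q1 G - qmin G := hmax _ (KPlus_connected (by omega))
    linarith [two_mul_sub_five_le_sQ_KPlus (n := n) (by omega), G.qmin_nonneg]
  have hdeg : (G.degree v : ℝ) ≤ n - 1 := by
    have := G.degree_lt_card_verts v
    rw [Fintype.card_fin] at this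
    rw [le_sub_iff_add_le]
    exact_mod_cast this
  have hxv : x v ^ 2 ≤ 1 :=
    hx1 ▸ single_le_sum (fun u _ => sq_nonneg (x u)) (mem_univ v)
  have key := G.sq_sub_degree_mul_le hx v
  rw [hx1] at key
  exact lt_sqrt_div_of_sq_mul_sq_le (by linarith) (by linarith) hdeg hxv key

theorem stmt14 (n : ℕ) (hn : 6 ≤ n) (G : SimpleGraph (Fin n)) (hconn : G.Connected)
    (hmax : ∀ H : SimpleGraph (Fin n), H.Connected → sQ H ≤ sQ G)
    (x : Fin n → ℝ) (hx0 : ∀ v, 0 < x v) (hx1 : ∑ v, x v ^ 2 = 1)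
    (hx : (signlessLap G).mulVec x = q1 G • x) :
    ∀ v : Fin n, x v < Real.sqrt n / ((n : ℝ) - 3) :=
  stmt14_general n hn G hmax x hx1 hx
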